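/- Let $r,\beta>0$, $\theta\in\mathbb{R}$, $T>0$, $q>0$, $\gamma>0$ with $\gamma\ne1$, $\alpha\in(0,1)$, $\gamma_1:=1-\alpha(1-\gamma)$, $0<L_0<L_1$, $\varepsilon_0>\varepsilon_1\ge0$, and let $\psi_0:[0,T]\to\mathbb{R}$ be continuously differentiable with $|\psi_0(\tau)|\le q$ and $|\psi_0'(\tau)|\le q$ for all $\tau\in[0,T]$. For $\varepsilon>0$ define $\overline{z}(\tau,x):=-\psi_0(\tau)\big(\tfrac{\tau}{\varepsilon}\mathbf{1}_{\{\tau\le\varepsilon\}}+\mathbf{1}_{\{\tau>\varepsilon\}}\big)+\varepsilon^3\big(x+\tfrac{2}{\varepsilon^2}\big)^2\mathbf{1}_{\{x\ge-2/\varepsilon^2\}}$. Then there exists $\varepsilon^*>0$ such that for every $\varepsilon\in(0,\varepsilon^*)$ and every $(\tau,x)$ with $0<\tau<T$, $x<-1/\varepsilon^2$, $\tau\ne\varepsilon$ and $x\ne-2/\varepsilon^2$, one has $\partial_\tau\overline{z}(\tau,x)-\tfrac{\theta^2}{2}\partial_{xx}\overline{z}(\tau,x)-\big(\beta-r+\tfrac{\theta^2}{2}\big)\partial_x\overline{z}(\tau,x)+r\,\overline{z}(\tau,x)\;\ge\;U(x)$.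 -/

import Mathlib

open Real Set

/-- The barrier `z̄(τ,x) = -ψ0(τ)(τ/ε · 1_{τ≤ε} + 1_{τ>ε}) + ε³(x+2/ε²)² 1_{x≥-2/ε²}`. -/
noncomputable def zbar (ψ0 : ℝ → ℝ) (ε τ x : ℝ) : ℝ :=
  -ψ0 τ * ((τ / ε) * (if τ ≤ ε then (1:ℝ) else 0) + (if ε < τ then (1:ℝ) else 0))
    + ε ^ 3 * (x + 2 / ε ^ 2) ^ 2 * (if -2 / ε ^ 2 ≤ x then (1:ℝ) else 0)

/-!
Away from its kinks `zbar` is smooth. Its time derivative is at least `-(q + q / ε)`, the ramp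
having slope `1 / ε`; on `x < -1 / ε²` the parabola `ε³ (x + 2 / ε²)²` has slope at most `2 ε`
and curvature at most `2 ε³`, and `zbar ≥ -q`. So the operator applied to `zbar` is at least
`-(q / ε + O(1))`, whereas `x < -1 / ε²` gives `A e^{-x/γ1} ≥ A / (γ1 ε²)`, which wins for small
`ε`. Finally `A > 0` because `1 - γ1 = α (1 - γ)` and `γ1 - γ = (1 - α) (1 - γ)` have the same sign.
-/

open Filter Topology

noncomputable def zbarRamp (ε τ : ℝ) : ℝ :=
  (τ / ε) * (if τ ≤ ε then (1:ℝ) else 0) + (if ε < τ then (1:ℝ) else 0)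

noncomputable def zbarSpace (ε x : ℝ) : ℝ :=
  ε ^ 3 * (x + 2 / ε ^ 2) ^ 2 * (if -2 / ε ^ 2 ≤ x then (1:ℝ) else 0)

theorem zbar_eq_add (ψ0 : ℝ → ℝ) (ε τ x : ℝ) :
    zbar ψ0 ε τ x = -ψ0 τ * zbarRamp ε τ + zbarSpace ε x :=
  rfl

section Ramp

variable {ε τ : ℝ}

theorem abs_zbarRamp_le_one (hε : 0 < ε) (hτ : 0 ≤ τ) : |zbarRamp ε τ| ≤ 1 := by
  unfold zbarRamp
  split_ifs with h₁
  · linarith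
  · have : τ / ε ≤ 1 := (div_le_one hε).2 h₁
    rw [abs_of_nonneg (by positivity)]
    linarith
  · norm_num
  · norm_num

theorem hasDerivAt_zbarRamp (hτ : τ ≠ ε) :
    HasDerivAt (zbarRamp ε) (if τ < ε then ε⁻¹ else 0) τ := by
  rcases hτ.lt_or_gt with hlt | hgt
  · have hev : zbarRamp ε =ᶠ[𝓝 τ] fun t => t / ε := by
      filter_upwards [Iio_mem_nhds hlt] with t ht
      simp [zbarRamp, (mem_Iio.1 ht).le, not_lt.2 (mem_Iio.1 ht).le]
    rw [if_pos hlt]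
    simpa using ((hasDerivAt_id τ).div_const ε).congr_of_eventuallyEq hev
  · have hev : zbarRamp ε =ᶠ[𝓝 τ] fun _ => 1 := by
      filter_upwards [Ioi_mem_nhds hgt] with t ht
      simp [zbarRamp, mem_Ioi.1 ht, not_le.2 (mem_Ioi.1 ht)]
    rw [if_neg (lt_asymm hgt)]
    exact (hasDerivAt_const τ 1).congr_of_eventuallyEq hev

end Ramp

theorem neg_le_deriv_zbar_time {ψ0 ψ0' : ℝ → ℝ} {q ε τ : ℝ} (x : ℝ) (hε : 0 < ε) (hτ : 0 ≤ τ)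
    (hτε : τ ≠ ε) (hψ0 : HasDerivAt ψ0 (ψ0' τ) τ) (hψ0bd : |ψ0 τ| ≤ q) (hψ0'bd : |ψ0' τ| ≤ q) :
    -(q + q / ε) ≤ deriv (fun t => zbar ψ0 ε t x) τ := by
  set d : ℝ := if τ < ε then ε⁻¹ else 0
  have hd : |d| ≤ ε⁻¹ := by
    simp only [d]; split_ifs <;> simp [abs_of_pos, hε, le_of_lt]
  have hderiv : HasDerivAt (fun t => zbar ψ0 ε t x)
      (-(ψ0' τ * zbarRamp ε τ + ψ0 τ * d)) τ := by
    refine ((hψ0.fun_neg.fun_mul (hasDerivAt_zbarRamp hτε)).add_const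
      (zbarSpace ε x)).congr_deriv ?_
    ring
  have hq : 0 ≤ q := (abs_nonneg _).trans hψ0bd
  have hbound : |ψ0' τ * zbarRamp ε τ + ψ0 τ * d| ≤ q * 1 + q * ε⁻¹ := by
    calc _ ≤ |ψ0' τ| * |zbarRamp ε τ| + |ψ0 τ| * |d| := by
          rw [← abs_mul, ← abs_mul]; exact abs_add_le _ _
      _ ≤ q * 1 + q * ε⁻¹ := by
          gcongr
          exact abs_zbarRamp_le_one hε hτ
  rw [hderiv.deriv, div_eq_mul_inv]
  linarith [le_abs_self (ψ0' τ * zbarRamp ε τ + ψ0 τ * d)]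

theorem eventuallyEq_ite_le_of_ne {α β : Type*} [LinearOrder α] [TopologicalSpace α]
    [OrderTopology α] {a x : α} (b c : β) (hx : x ≠ a) :
    (fun z => if a ≤ z then b else c) =ᶠ[𝓝 x] fun _ => if a ≤ x then b else c := by
  rcases hx.lt_or_gt with hlt | hgt
  · filter_upwards [Iio_mem_nhds hlt] with z hz
    simp [not_le.2 hlt, not_le.2 (mem_Iio.1 hz)]
  · filter_upwards [Ioi_mem_nhds hgt] with z hz
    simp [hgt.le, (mem_Ioi.1 hz).le]

section Space

variable {ε x : ℝ}

theorem zbarSpace_nonneg (hε : 0 ≤ ε) (x : ℝ) : 0 ≤ zbarSpace ε x := by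
  unfold zbarSpace
  split_ifs <;> positivity

theorem zbarSpace_eventuallyEq (hx : x ≠ -2 / ε ^ 2) :
    zbarSpace ε =ᶠ[𝓝 x]
      fun z => ε ^ 3 * (z + 2 / ε ^ 2) ^ 2 * (if -2 / ε ^ 2 ≤ x then (1:ℝ) else 0) := by
  filter_upwards [eventuallyEq_ite_le_of_ne (1:ℝ) 0 hx] with z hz
  rw [zbarSpace, hz]

theorem deriv_zbarSpace (hx : x ≠ -2 / ε ^ 2) :
    deriv (zbarSpace ε) x
      = ε ^ 3 * (2 * (x + 2 / ε ^ 2)) * (if -2 / ε ^ 2 ≤ x then (1:ℝ) else 0) := by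
  rw [(zbarSpace_eventuallyEq hx).deriv_eq]
  have h := (((hasDerivAt_id x).add_const (2 / ε ^ 2)).fun_pow 2).const_mul (ε ^ 3)
  refine (h.mul_const _).deriv.trans ?_
  simp

theorem deriv_deriv_zbarSpace (hx : x ≠ -2 / ε ^ 2) :
    deriv (deriv (zbarSpace ε)) x = ε ^ 3 * 2 * (if -2 / ε ^ 2 ≤ x then (1:ℝ) else 0) := by
  have hev : deriv (zbarSpace ε) =ᶠ[𝓝 x]
      fun y => ε ^ 3 * (2 * (y + 2 / ε ^ 2)) * (if -2 / ε ^ 2 ≤ x then (1:ℝ) else 0) := by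
    filter_upwards [isOpen_ne.mem_nhds hx, eventuallyEq_ite_le_of_ne (1:ℝ) 0 hx] with y hy hs
    rw [deriv_zbarSpace hy, hs]
  rw [hev.deriv_eq]
  have h := ((((hasDerivAt_id x).add_const (2 / ε ^ 2)).const_mul 2).const_mul (ε ^ 3))
  refine (h.mul_const _).deriv.trans ?_
  simp

theorem deriv_zbarSpace_mem_Icc (hε : 0 < ε) (hx : x < -1 / ε ^ 2) (hx' : x ≠ -2 / ε ^ 2) :
    deriv (zbarSpace ε) x ∈ Icc 0 (2 * ε) := by
  rw [deriv_zbarSpace hx']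
  split_ifs with h
  · have hε2 : 0 < ε ^ 2 := by positivity
    have hu : 0 ≤ x + 2 / ε ^ 2 := by rw [neg_div] at h; linarith
    have hu' : (x + 2 / ε ^ 2) * ε ^ 2 ≤ 1 := by
      rw [add_mul, div_mul_cancel₀ _ hε2.ne']
      have := (lt_div_iff₀ hε2).1 hx
      linarith
    constructor
    · positivity
    · nlinarith
  · simp [hε.le]

theorem deriv_deriv_zbarSpace_mem_Icc (hε : 0 ≤ ε) (hx : x ≠ -2 / ε ^ 2) :
    deriv (deriv (zbarSpace ε)) x ∈ Icc 0 (2 * ε ^ 3) := by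
  rw [deriv_deriv_zbarSpace hx]
  split_ifs
  · constructor <;> nlinarith [pow_nonneg hε 3]
  · simp [pow_nonneg hε 3]

end Space

theorem deriv_zbar_eq_deriv_zbarSpace (ψ0 : ℝ → ℝ) (ε τ : ℝ) :
    deriv (fun z => zbar ψ0 ε τ z) = deriv (zbarSpace ε) :=
  deriv_const_add' (-ψ0 τ * zbarRamp ε τ)

theorem neg_le_operator_zbar {ψ0 ψ0' : ℝ → ℝ} {q r b θ ε τ x : ℝ} (hr : 0 ≤ r) (hε : 0 < ε)
    (hτ : 0 ≤ τ) (hτε : τ ≠ ε) (hx : x < -1 / ε ^ 2) (hxε : x ≠ -2 / ε ^ 2)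
    (hψ0 : HasDerivAt ψ0 (ψ0' τ) τ) (hψ0bd : |ψ0 τ| ≤ q) (hψ0'bd : |ψ0' τ| ≤ q) :
    -(q + q / ε + θ ^ 2 * ε ^ 3 + 2 * |b| * ε + r * q) ≤
      deriv (fun t => zbar ψ0 ε t x) τ
        - θ ^ 2 / 2 * deriv (deriv (fun z => zbar ψ0 ε τ z)) x
        - b * deriv (fun z => zbar ψ0 ε τ z) x
        + r * zbar ψ0 ε τ x := by
  rw [deriv_zbar_eq_deriv_zbarSpace, zbar_eq_add]
  have hDτ := neg_le_deriv_zbar_time x hε hτ hτε hψ0 hψ0bd hψ0'bd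
  obtain ⟨hD1, hD1'⟩ := deriv_zbarSpace_mem_Icc hε hx hxε
  obtain ⟨hD2, hD2'⟩ := deriv_deriv_zbarSpace_mem_Icc hε.le hxε
  have hdiffusion : θ ^ 2 / 2 * deriv (deriv (zbarSpace ε)) x ≤ θ ^ 2 * ε ^ 3 := by
    nlinarith [sq_nonneg θ]
  have hdrift : b * deriv (zbarSpace ε) x ≤ 2 * |b| * ε :=
    calc b * deriv (zbarSpace ε) x ≤ |b| * deriv (zbarSpace ε) x :=
          mul_le_mul_of_nonneg_right (le_abs_self b) hD1
      _ ≤ |b| * (2 * ε) := mul_le_mul_of_nonneg_left hD1' (abs_nonneg b)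
      _ = 2 * |b| * ε := by ring
  have htime : -q ≤ -ψ0 τ * zbarRamp ε τ := by
    have := abs_mul (ψ0 τ) (zbarRamp ε τ) ▸
      mul_le_mul hψ0bd (abs_zbarRamp_le_one hε hτ) (abs_nonneg _) ((abs_nonneg _).trans hψ0bd)
    linarith [le_abs_self (ψ0 τ * zbarRamp ε τ)]
  have hreaction : -(r * q) ≤ r * (-ψ0 τ * zbarRamp ε τ + zbarSpace ε x) := by
    nlinarith [zbarSpace_nonneg hε.le x]
  linarith

theorem div_le_exp_neg_div {x y γ : ℝ} (hγ : 0 < γ) (hx : x ≤ -y) : y / γ ≤ exp (-x / γ) := by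
  have h : y / γ ≤ -x / γ := div_le_div_of_nonneg_right (by linarith) hγ.le
  linarith [add_one_le_exp (-x / γ)]

theorem mul_rpow_sub_rpow_pos {a b s p : ℝ} (ha : 0 < a) (hab : a < b) (hsp : 0 < s * p) :
    0 < s * (b ^ p - a ^ p) := by
  rcases lt_trichotomy p 0 with hp | rfl | hp
  · exact mul_pos_of_neg_of_neg (neg_of_mul_pos_left hsp hp.le)
      (sub_neg.2 (rpow_lt_rpow_of_neg ha hab hp))
  · simp at hsp
  · exact mul_pos (pos_of_mul_pos_left hsp hp.le) (sub_pos.2 (rpow_lt_rpow ha.le hab hp))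

theorem eventually_add_div_le_div_sq {c : ℝ} (K q a b : ℝ) (hc : 0 < c) :
    ∀ᶠ ε in 𝓝[>] 0, K + q / ε + a * ε ^ 3 + b * ε ≤ c / ε ^ 2 := by
  have hlim : Tendsto (fun ε : ℝ => K * ε ^ 2 + q * ε + a * ε ^ 5 + b * ε ^ 3) (𝓝 0) (𝓝 0) := by
    have h : Continuous fun ε : ℝ => K * ε ^ 2 + q * ε + a * ε ^ 5 + b * ε ^ 3 := by fun_prop
    simpa using h.tendsto 0
  filter_upwards [self_mem_nhdsWithin,
    nhdsWithin_le_nhds (hlim.eventually (gt_mem_nhds hc))] with ε hε hsmall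
  have hε : 0 < ε := hε
  rw [le_div_iff₀ (by positivity)]
  have h : (K + q / ε + a * ε ^ 3 + b * ε) * ε ^ 2
      = K * ε ^ 2 + q * ε + a * ε ^ 5 + b * ε ^ 3 := by
    field_simp
  linarith

theorem stmt9_general (r β θ T q γ α γ1 L0 L1 ε0 ε1 : ℝ) (ψ0 ψ0' : ℝ → ℝ)
    (hr : 0 < r)
    (hγ : 0 < γ) (hγne : γ ≠ 1) (hα : α ∈ Ioo (0:ℝ) 1)
    (hγ1 : γ1 = 1 - α * (1 - γ)) (hL0 : 0 < L0) (hL : L0 < L1)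
    (hψ0deriv : ∀ τ ∈ Icc (0:ℝ) T, HasDerivAt ψ0 (ψ0' τ) τ)
    (hψ0bd : ∀ τ ∈ Icc (0:ℝ) T, |ψ0 τ| ≤ q)
    (hψ0'bd : ∀ τ ∈ Icc (0:ℝ) T, |ψ0' τ| ≤ q) :
    ∃ εstar > (0:ℝ), ∀ ε ∈ Ioo (0:ℝ) εstar, ∀ τ x : ℝ,
      0 < τ → τ < T → x < -1 / ε ^ 2 → τ ≠ ε → x ≠ -2 / ε ^ 2 →
      deriv (fun t => zbar ψ0 ε t x) τ
        - θ ^ 2 / 2 * deriv (deriv (fun z => zbar ψ0 ε τ z)) x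
        - (β - r + θ ^ 2 / 2) * deriv (fun z => zbar ψ0 ε τ z) x
        + r * zbar ψ0 ε τ x
      ≥ (ε0 - ε1) -
          (γ1 / (1 - γ1) * (L1 ^ ((γ1 - γ) / γ1) - L0 ^ ((γ1 - γ) / γ1)))
            * Real.exp (-x / γ1) := by
  obtain ⟨hα0, hα1⟩ := hα
  have hγ1pos : 0 < γ1 := by rw [hγ1]; nlinarith
  set A := γ1 / (1 - γ1) * (L1 ^ ((γ1 - γ) / γ1) - L0 ^ ((γ1 - γ) / γ1))
  have hA : 0 < A := by
    refine mul_rpow_sub_rpow_pos hL0 hL ?_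
    have h1γ : 1 - γ ≠ 0 := sub_ne_zero.2 hγne.symm
    have hexponents : γ1 / (1 - γ1) * ((γ1 - γ) / γ1) = (1 - α) / α := by
      rw [hγ1] at hγ1pos ⊢
      field_simp
      ring
    rw [hexponents]
    exact div_pos (by linarith) hα0
  obtain ⟨εstar, hεstar, hsmall⟩ := (nhdsGT_basis 0).eventually_iff.1
    (eventually_add_div_le_div_sq (ε0 - ε1 + q + r * q) q (θ ^ 2) (2 * |β - r + θ ^ 2 / 2|)
      (div_pos hA hγ1pos))
  refine ⟨εstar, hεstar, fun ε hε τ x hτ0 hτT hx hτε hxε => ?_⟩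
  have hτ : τ ∈ Icc 0 T := ⟨hτ0.le, hτT.le⟩
  have hLHS := neg_le_operator_zbar (θ := θ) (b := β - r + θ ^ 2 / 2) hr.le hε.1 hτ0.le hτε hx hxε
    (hψ0deriv τ hτ) (hψ0bd τ hτ) (hψ0'bd τ hτ)
  have hexp : 1 / ε ^ 2 / γ1 ≤ exp (-x / γ1) :=
    div_le_exp_neg_div hγ1pos (by rw [neg_div] at hx; exact hx.le)
  have hRHS : A / γ1 / ε ^ 2 ≤ A * exp (-x / γ1) :=
    calc A / γ1 / ε ^ 2 = A * (1 / ε ^ 2 / γ1) := by ring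
      _ ≤ A * exp (-x / γ1) := mul_le_mul_of_nonneg_left hexp hA.le
  linarith [hsmall hε]

/-- For all small `ε > 0`, `z̄` is a supersolution
`∂_τ z̄ - (θ²/2) ∂_{xx} z̄ - (β-r+θ²/2) ∂_x z̄ + r z̄ ≥ U(x)`
on `(0,T)×(-∞,-1/ε²)` away from the kink loci `τ = ε` and `x = -2/ε²`. -/
theorem stmt9 (r β θ T q γ α γ1 L0 L1 ε0 ε1 : ℝ) (ψ0 ψ0' : ℝ → ℝ)
    (hr : 0 < r) (hβ : 0 < β) (hT : 0 < T) (hq : 0 < q)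
    (hγ : 0 < γ) (hγne : γ ≠ 1) (hα : α ∈ Ioo (0:ℝ) 1)
    (hγ1 : γ1 = 1 - α * (1 - γ)) (hL0 : 0 < L0) (hL : L0 < L1)
    (hε1 : 0 ≤ ε1) (hε : ε1 < ε0)
    (hψ0deriv : ∀ τ ∈ Icc (0:ℝ) T, HasDerivAt ψ0 (ψ0' τ) τ)
    (hψ0cont : ContinuousOn ψ0' (Icc 0 T))
    (hψ0bd : ∀ τ ∈ Icc (0:ℝ) T, |ψ0 τ| ≤ q)
    (hψ0'bd : ∀ τ ∈ Icc (0:ℝ) T, |ψ0' τ| ≤ q) :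
    ∃ εstar > (0:ℝ), ∀ ε ∈ Ioo (0:ℝ) εstar, ∀ τ x : ℝ,
      0 < τ → τ < T → x < -1 / ε ^ 2 → τ ≠ ε → x ≠ -2 / ε ^ 2 →
      deriv (fun t => zbar ψ0 ε t x) τ
        - θ ^ 2 / 2 * deriv (deriv (fun z => zbar ψ0 ε τ z)) x
        - (β - r + θ ^ 2 / 2) * deriv (fun z => zbar ψ0 ε τ z) x
        + r * zbar ψ0 ε τ x
      ≥ (ε0 - ε1) -
          (γ1 / (1 - γ1) * (L1 ^ ((γ1 - γ) / γ1) - L0 ^ ((γ1 - γ) / γ1)))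
            * Real.exp (-x / γ1) :=
  stmt9_general r β θ T q γ α γ1 L0 L1 ε0 ε1 ψ0 ψ0' hr hγ hγne hα hγ1 hL0 hL hψ0deriv hψ0bd hψ0'bd
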